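/- If P is a super-uniform random variable (i.e., Pr[P ≤ u] ≤ u for all u ∈ [0,1]) and ω is a positive random variable independent of P with E[ω] = u₀ ≤ 1, then the weighted p-value P/ω satisfies Pr[P/ω ≤ a] ≤ u₀·a ≤ a for all a ∈ [0,1] with a·ω ≤ 1 almost surely. -/
import Mathlib

open MeasureTheory ProbabilityTheory

/-- If P is super-uniform, ω positive and independent of P with mean u₀ ≤ 1,
and a·ω ≤ 1 a.s., then Pr[P/ω ≤ a] ≤ u₀·a ≤ a for a ∈ [0,1]. -/
theorem weighted_pvalue_superuniform
    {Ω : Type*} [MeasurableSpace Ω] (μ : Measure Ω) [IsProbabilityMeasure μ]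
    (P W : Ω → ℝ) (hP : Measurable P) (hW : Measurable W)
    (hsup : ∀ u ∈ Set.Icc (0:ℝ) 1, (μ {x | P x ≤ u}).toReal ≤ u)
    (hWpos : ∀ᵐ x ∂μ, 0 < W x)
    (hindep : IndepFun P W μ)
    (u₀ : ℝ) (hu₀ : ∫ x, W x ∂μ = u₀) (hu₀le : u₀ ≤ 1)
    (a : ℝ) (ha : a ∈ Set.Icc (0:ℝ) 1)
    (haW : ∀ᵐ x ∂μ, a * W x ≤ 1) :
    (μ {x | P x / W x ≤ a}).toReal ≤ u₀ * a ∧ u₀ * a ≤ a := by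
  obtain ⟨ha0, ha1⟩ := ha
  have hu₀0 : 0 ≤ u₀ := by
    rw [← hu₀]; exact integral_nonneg_of_ae (hWpos.mono fun x hx => hx.le)
  refine ⟨?_, by nlinarith⟩
  -- step 1: the event equals {P ≤ a W} a.e.
  have hset : μ {x | P x / W x ≤ a} = μ {x | P x ≤ a * W x} := by
    apply measure_congr
    filter_upwards [hWpos] with x hx
    show (P x / W x ≤ a) = (P x ≤ a * W x)
    simp only [eq_iff_iff]
    rw [div_le_iff₀ hx, mul_comm]
  rw [hset]
  set κ := μ.map P with hκ
  set ν := μ.map W with hν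
  haveI : IsProbabilityMeasure κ := Measure.isProbabilityMeasure_map hP.aemeasurable
  haveI : IsProbabilityMeasure ν := Measure.isProbabilityMeasure_map hW.aemeasurable
  have hmap : μ.map (fun x => (P x, W x)) = κ.prod ν :=
    (indepFun_iff_map_prod_eq_prod_map_map hP.aemeasurable hW.aemeasurable).mp hindep
  have hs : MeasurableSet {p : ℝ × ℝ | p.1 ≤ a * p.2} :=
    measurableSet_le measurable_fst (measurable_const.mul measurable_snd)
  have h2 : μ {x | P x ≤ a * W x} = ∫⁻ w, κ {p : ℝ | p ≤ a * w} ∂ν := by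
    have : μ {x | P x ≤ a * W x}
        = (μ.map (fun x => (P x, W x))) {p : ℝ × ℝ | p.1 ≤ a * p.2} := by
      rw [Measure.map_apply (hP.prodMk hW) hs]; rfl
    rw [this, hmap, Measure.prod_apply_symm hs]
    rfl
  rw [h2]
  -- a.e. facts transported to ν
  have hνpos : ∀ᵐ w ∂ν, 0 < w :=
    (ae_map_iff hW.aemeasurable measurableSet_Ioi).mpr hWpos
  have hνle : ∀ᵐ w ∂ν, a * w ≤ 1 := by
    refine (ae_map_iff hW.aemeasurable ?_).mpr haW
    exact measurableSet_le (measurable_const.mul measurable_id) measurable_const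
  -- pointwise bound
  have hpt : ∀ᵐ w ∂ν, κ {p : ℝ | p ≤ a * w} ≤ ENNReal.ofReal (a * w) := by
    filter_upwards [hνpos, hνle] with w hw hw1
    have haw0 : 0 ≤ a * w := mul_nonneg ha0 hw.le
    have hκs : κ {p : ℝ | p ≤ a * w} = μ {x | P x ≤ a * w} :=
      Measure.map_apply hP measurableSet_Iic
    rw [hκs]
    exact (ENNReal.le_ofReal_iff_toReal_le (measure_ne_top μ _) haw0).mpr
      (hsup (a * w) ⟨haw0, hw1⟩)
  have hle : ∫⁻ w, κ {p : ℝ | p ≤ a * w} ∂ν ≤ ∫⁻ w, ENNReal.ofReal (a * w) ∂ν :=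
    lintegral_mono_ae hpt
  -- integrability of w ↦ a * w under ν
  have hint : Integrable (fun w => a * w) ν := by
    refine (integrable_const (1:ℝ)).mono' (measurable_const.mul measurable_id).aestronglyMeasurable ?_
    filter_upwards [hνpos, hνle] with w hw hw1
    rw [Real.norm_eq_abs, abs_of_nonneg (mul_nonneg ha0 hw.le)]; exact hw1
  have heq : ∫⁻ w, ENNReal.ofReal (a * w) ∂ν = ENNReal.ofReal (∫ w, a * w ∂ν) := by
    rw [ofReal_integral_eq_lintegral_ofReal hint]
    filter_upwards [hνpos] with w hw
    exact mul_nonneg ha0 hw.le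
  have hval : ∫ w, a * w ∂ν = a * u₀ := by
    rw [hν, integral_map hW.aemeasurable (by fun_prop), ← hu₀, ← integral_const_mul]
  calc (∫⁻ w, κ {p : ℝ | p ≤ a * w} ∂ν).toReal
      ≤ (ENNReal.ofReal (a * u₀)).toReal := by
        apply ENNReal.toReal_mono ENNReal.ofReal_ne_top
        rw [← hval, ← heq]; exact hle
    _ = u₀ * a := by rw [ENNReal.toReal_ofReal (mul_nonneg ha0 hu₀0), mul_comm]
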